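/- arXiv:1504.07837 — 2 statements merged into one kernel-verified Lean document; each statement's English description precedes it below -/
import Mathlib

section
/- Let $\eta > 0$ and $0 < \rho \le \eta$, and set $K_{\pm}(\alpha) = \frac{\sin(\pi\alpha\rho)\sin(\pi\alpha(2\eta\pm\rho))}{\pi^2\alpha^2\rho}$. Then for every real $t$, $0 \le \int_{\mathbb{R}} e(\alpha t) K_{-}(\alpha)\, d\alpha \le U_\eta(t) \le \int_{\mathbb{R}} e(\alpha t) K_{+}(\alpha)\, d\alpha \le 1$, where $U_\eta(t) = 1$ if $|t| < \eta$ and $U_\eta(t) = 0$ if $|t| \ge \eta$, and $e(x) = e^{2\pi i x}$. -/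
/-!
`K₊` (resp. `K₋`) is the Fourier transform of the trapezoid with ramps of width `ρ` that equals
`1` on `[-η, η]` (resp. `[-(η - ρ), η - ρ]`) and vanishes outside `(-(η + ρ), η + ρ)`
(resp. `(-η, η)`): the second derivative of such a trapezoid is `ρ⁻¹` times four point masses,
which is where the difference of cosines, i.e. the product of sines, comes from. The transform
decays like `α⁻²`, so Fourier inversion applies and the integrals of the statement are the values
of the trapezoids at `t`. These lie in `[0, 1]` and sandwich the indicator of `(-η, η)`.
-/

open Real MeasureTheory

/-- Freeman's kernel: `s = 1` gives `K₊`, `s = -1` gives `K₋`. -/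
noncomputable def freemanKernel (η ρ s : ℝ) (α : ℝ) : ℝ :=
  if α = 0 then 2 * η + s * ρ
  else Real.sin (π * α * ρ) * Real.sin (π * α * (2 * η + s * ρ)) / (π ^ 2 * α ^ 2 * ρ)


open intervalIntegral FourierTransform

noncomputable def trapezoid (A ρ x : ℝ) : ℝ := max 0 (min 1 ((A - |x|) / ρ))

section Trapezoid

variable {A ρ x : ℝ}

lemma continuous_trapezoid (A ρ : ℝ) : Continuous (trapezoid A ρ) := by
  unfold trapezoid
  fun_prop

lemma trapezoid_nonneg (A ρ x : ℝ) : 0 ≤ trapezoid A ρ x := le_max_left _ _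

lemma trapezoid_le_one (A ρ x : ℝ) : trapezoid A ρ x ≤ 1 := max_le zero_le_one (min_le_left _ _)

lemma trapezoid_eq_zero_of_le_abs (hρ : 0 < ρ) (h : A ≤ |x|) : trapezoid A ρ x = 0 :=
  max_eq_left <| (min_le_right _ _).trans <| div_nonpos_of_nonpos_of_nonneg (by linarith) hρ.le

lemma trapezoid_eq_one_of_abs_le (hρ : 0 < ρ) (h : |x| ≤ A - ρ) : trapezoid A ρ x = 1 := by
  rw [trapezoid, min_eq_left ((one_le_div hρ).2 (by linarith)), max_eq_right zero_le_one]

lemma trapezoid_eq_of_abs_mem_Icc (hρ : 0 < ρ) (h : |x| ∈ Set.Icc (A - ρ) A) :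
    trapezoid A ρ x = (A - |x|) / ρ := by
  rw [trapezoid, min_eq_right ((div_le_one hρ).2 (by linarith [h.1])),
    max_eq_right (div_nonneg (by linarith [h.2]) hρ.le)]

lemma abs_lt_of_trapezoid_ne_zero (hρ : 0 < ρ) (h : trapezoid A ρ x ≠ 0) : |x| < A :=
  not_le.1 (mt (trapezoid_eq_zero_of_le_abs hρ) h)

lemma trapezoid_le_ite (hρ : 0 < ρ) : trapezoid A ρ x ≤ if |x| < A then 1 else 0 := by
  split_ifs with h
  · exact trapezoid_le_one A ρ x
  · exact (trapezoid_eq_zero_of_le_abs hρ (not_lt.1 h)).le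

lemma ite_le_trapezoid (hρ : 0 < ρ) : (if |x| < A - ρ then 1 else 0) ≤ trapezoid A ρ x := by
  split_ifs with h
  · exact (trapezoid_eq_one_of_abs_le hρ h.le).ge
  · exact trapezoid_nonneg A ρ x

lemma hasCompactSupport_trapezoid (hρ : 0 < ρ) : HasCompactSupport (trapezoid A ρ) :=
  HasCompactSupport.intro (isCompact_Icc (a := -A) (b := A)) fun _ hx ↦
    trapezoid_eq_zero_of_le_abs hρ <| not_lt.1 fun h ↦ hx ⟨(abs_lt.1 h).1.le, (abs_lt.1 h).2.le⟩

lemma integrable_trapezoid (hρ : 0 < ρ) : Integrable (trapezoid A ρ) :=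
  (continuous_trapezoid A ρ).integrable_of_hasCompactSupport (hasCompactSupport_trapezoid hρ)

end Trapezoid

lemma freemanKernel_eq_mul_sinc_mul_sinc {ρ : ℝ} (hρ : ρ ≠ 0) (η s α : ℝ) :
    freemanKernel η ρ s α =
      (2 * η + s * ρ) * sinc (π * α * ρ) * sinc (π * α * (2 * η + s * ρ)) := by
  rcases eq_or_ne α 0 with rfl | hα
  · simp [freemanKernel]
  rcases eq_or_ne (2 * η + s * ρ) 0 with hL | hL
  · simp [freemanKernel, hL]
  rw [freemanKernel, if_neg hα, sinc_of_ne_zero (by positivity), sinc_of_ne_zero (by positivity)]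
  generalize 2 * η + s * ρ = L at hL ⊢
  field_simp

lemma freemanKernel_neg_one (η ρ : ℝ) : freemanKernel η ρ (-1) = freemanKernel (η - ρ) ρ 1 := by
  ext α
  simp only [freemanKernel]
  ring_nf

lemma continuous_freemanKernel {ρ : ℝ} (hρ : ρ ≠ 0) (η s : ℝ) :
    Continuous (freemanKernel η ρ s) := by
  simp_rw [funext (freemanKernel_eq_mul_sinc_mul_sinc hρ η s)]
  fun_prop

lemma abs_freemanKernel_le {η ρ s : ℝ} (hρ : 0 < ρ) (hL : 0 ≤ 2 * η + s * ρ) (α : ℝ) :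
    |freemanKernel η ρ s α| ≤ 2 * η + s * ρ := by
  rw [freemanKernel_eq_mul_sinc_mul_sinc hρ.ne', abs_mul, abs_mul, abs_of_nonneg hL]
  have h₁ := abs_sinc_le_one (π * α * ρ)
  have h₂ := abs_sinc_le_one (π * α * (2 * η + s * ρ))
  calc (2 * η + s * ρ) * |sinc (π * α * ρ)| * |sinc (π * α * (2 * η + s * ρ))|
      ≤ (2 * η + s * ρ) * 1 * 1 := by gcongr
    _ = _ := by ring

lemma sq_mul_abs_freemanKernel_le {ρ : ℝ} (hρ : 0 < ρ) (η s α : ℝ) :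
    α ^ 2 * |freemanKernel η ρ s α| ≤ 1 / (π ^ 2 * ρ) := by
  rcases eq_or_ne α 0 with rfl | hα
  · rw [zero_pow two_ne_zero, zero_mul]
    positivity
  rw [freemanKernel, if_neg hα, abs_div, abs_mul,
    abs_of_pos (by positivity : 0 < π ^ 2 * α ^ 2 * ρ)]
  have h₁ := abs_sin_le_one (π * α * ρ)
  have h₂ := abs_sin_le_one (π * α * (2 * η + s * ρ))
  calc α ^ 2 * (|sin (π * α * ρ)| * |sin (π * α * (2 * η + s * ρ))| / (π ^ 2 * α ^ 2 * ρ))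
      ≤ α ^ 2 * (1 * 1 / (π ^ 2 * α ^ 2 * ρ)) := by gcongr
    _ = _ := by field_simp

lemma integrable_freemanKernel {η ρ s : ℝ} (hρ : 0 < ρ) (hL : 0 ≤ 2 * η + s * ρ) :
    Integrable (freemanKernel η ρ s) := by
  refine (integrable_inv_one_add_sq.const_mul (2 * η + s * ρ + 1 / (π ^ 2 * ρ))).mono'
    (continuous_freemanKernel hρ.ne' η s).aestronglyMeasurable (.of_forall fun α ↦ ?_)
  rw [Real.norm_eq_abs, ← div_eq_mul_inv, le_div_iff₀ (by positivity)]
  linarith [abs_freemanKernel_le hρ hL α, sq_mul_abs_freemanKernel_le hρ η s α]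

lemma integral_affine_mul_cexp {c : ℂ} (hc : c ≠ 0) (p q : ℂ) (u v : ℝ) :
    ∫ x in u..v, (p + q * x) * Complex.exp (c * x) =
      (((p + q * v) * c - q) * Complex.exp (c * v) - ((p + q * u) * c - q) * Complex.exp (c * u))
        / c ^ 2 := by
  have hderiv (x : ℝ) : HasDerivAt (fun y : ℝ ↦ ((p + q * y) * c - q) * Complex.exp (c * y) / c ^ 2)
      ((p + q * x) * Complex.exp (c * x)) x := by
    have hlin : HasDerivAt (fun y : ℝ ↦ (y : ℂ)) 1 x := Complex.ofRealCLM.hasDerivAt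
    have haffine : HasDerivAt (fun y : ℝ ↦ (p + q * y) * c - q) (q * c) x := by
      simpa using ((hlin.const_mul q).const_add p).mul_const c |>.sub_const q
    have hexp : HasDerivAt (fun y : ℝ ↦ Complex.exp (c * y)) (Complex.exp (c * x) * c) x := by
      simpa using (hlin.const_mul c).cexp
    refine ((haffine.mul hexp).div_const (c ^ 2)).congr_deriv ?_
    field_simp
    ring
  rw [integral_eq_sub_of_hasDerivAt (fun x _ ↦ hderiv x)
    ((by fun_prop : Continuous _).intervalIntegrable u v)]
  ring

lemma integral_trapezoid_mul {B ρ : ℝ} (hB : 0 ≤ B) (hρ : 0 < ρ) {g : ℝ → ℂ} (hg : Continuous g) :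
    ∫ x, (trapezoid (B + ρ) ρ x : ℂ) * g x =
      (∫ x in -(B + ρ)..-B, ((B + ρ) / ρ + 1 / ρ * x) * g x) + (∫ x in -B..B, g x)
        + ∫ x in B..B + ρ, ((B + ρ) / ρ + -1 / ρ * x) * g x := by
  have hint (u v : ℝ) : IntervalIntegrable (fun x ↦ (trapezoid (B + ρ) ρ x : ℂ) * g x) volume u v :=
    ((Complex.continuous_ofReal.comp (continuous_trapezoid _ _)).mul hg).intervalIntegrable u v
  have hsupp : Function.support (fun x ↦ (trapezoid (B + ρ) ρ x : ℂ) * g x) ⊆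
      Set.Ioc (-(B + ρ)) (B + ρ) := fun x hx ↦ by
    have := abs_lt.1 <| abs_lt_of_trapezoid_ne_zero hρ <| by simpa using left_ne_zero_of_mul hx
    exact ⟨this.1, this.2.le⟩
  have hpiece {u v : ℝ} (huv : u ≤ v) {f : ℝ → ℂ}
      (hf : ∀ x ∈ Set.Icc u v, (trapezoid (B + ρ) ρ x : ℂ) = f x) :
      ∫ x in u..v, (trapezoid (B + ρ) ρ x : ℂ) * g x = ∫ x in u..v, f x * g x := by
    refine intervalIntegral.integral_congr fun x hx ↦ ?_
    rw [Set.uIcc_of_le huv] at hx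
    simp only [hf x hx]
  rw [← integral_eq_integral_of_support_subset (μ := volume) hsupp,
    ← integral_add_adjacent_intervals (hint _ B) (hint B _),
    ← integral_add_adjacent_intervals (hint _ (-B)) (hint (-B) B)]
  congr 1
  · congr 1
    · refine hpiece (by linarith) fun x ⟨hx₁, hx₂⟩ ↦ ?_
      have habs : |x| = -x := abs_of_nonpos (by linarith)
      rw [trapezoid_eq_of_abs_mem_Icc hρ (by rw [habs]; constructor <;> linarith), habs]
      push_cast
      ring
    · refine (hpiece (f := 1) (by linarith) fun x ⟨hx₁, hx₂⟩ ↦ ?_).trans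
        (by simp only [Pi.one_apply, one_mul])
      rw [trapezoid_eq_one_of_abs_le hρ (abs_le.2 ⟨by linarith, by linarith⟩),
        Complex.ofReal_one, Pi.one_apply]
  · refine hpiece (by linarith) fun x ⟨hx₁, hx₂⟩ ↦ ?_
    have habs : |x| = x := abs_of_nonneg (by linarith)
    rw [trapezoid_eq_of_abs_mem_Icc hρ (by rw [habs]; constructor <;> linarith), habs]
    push_cast
    ring

lemma integral_trapezoid_mul_cexp {B ρ : ℝ} (hB : 0 ≤ B) (hρ : 0 < ρ) {c : ℂ} (hc : c ≠ 0) :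
    ∫ x, (trapezoid (B + ρ) ρ x : ℂ) * Complex.exp (c * x) =
      (2 * Complex.cosh (c * (B + ρ : ℝ)) - 2 * Complex.cosh (c * B)) / (ρ * c ^ 2) := by
  have hρ' : (ρ : ℂ) ≠ 0 := Complex.ofReal_ne_zero.2 hρ.ne'
  rw [integral_trapezoid_mul hB hρ (by fun_prop), integral_affine_mul_cexp hc,
    integral_exp_mul_complex hc, integral_affine_mul_cexp hc, Complex.two_cosh, Complex.two_cosh]
  push_cast
  field_simp
  ring

lemma freemanKernel_one_eq_cos_sub_cos (B ρ : ℝ) {ξ : ℝ} (hξ : ξ ≠ 0) :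
    freemanKernel B ρ 1 ξ =
      (2 * cos (2 * π * ξ * (B + ρ)) - 2 * cos (2 * π * ξ * B)) / (ρ * -(2 * π * ξ) ^ 2) := by
  have hcos := cos_sub_cos (2 * π * ξ * (B + ρ)) (2 * π * ξ * B)
  rw [show (2 * π * ξ * (B + ρ) + 2 * π * ξ * B) / 2 = π * ξ * (2 * B + 1 * ρ) by ring,
    show (2 * π * ξ * (B + ρ) - 2 * π * ξ * B) / 2 = π * ξ * ρ by ring] at hcos
  rw [freemanKernel, if_neg hξ, ← mul_sub, hcos]
  field_simp

lemma fourier_trapezoid {B ρ : ℝ} (hB : 0 ≤ B) (hρ : 0 < ρ) :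
    𝓕 (fun x ↦ (trapezoid (B + ρ) ρ x : ℂ)) = fun ξ ↦ (freemanKernel B ρ 1 ξ : ℂ) := by
  refine Continuous.ext_on (dense_compl_singleton 0) (VectorFourier.fourierIntegral_continuous
    Real.continuous_fourierChar (innerSL ℝ).continuous₂ (integrable_trapezoid hρ).ofReal)
    (Complex.continuous_ofReal.comp (continuous_freemanKernel hρ.ne' B 1)) fun ξ (hξ : ξ ≠ 0) ↦ ?_
  set c : ℂ := (-2 * π * ξ : ℝ) * Complex.I with hc_def
  have hc : c ≠ 0 := mul_ne_zero (mod_cast (by positivity : -2 * π * ξ ≠ 0)) Complex.I_ne_zero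
  have hcosh (r : ℝ) : Complex.cosh (c * r) = Real.cos (2 * π * ξ * r) := by
    rw [show c * r = ((-(2 * π * ξ * r) : ℝ) : ℂ) * Complex.I by rw [hc_def]; push_cast; ring,
      Complex.cosh_mul_I, ← Complex.ofReal_cos, Real.cos_neg]
  have hc2 : c ^ 2 = ((-(2 * π * ξ) ^ 2 : ℝ) : ℂ) := by
    rw [hc_def]
    push_cast
    linear_combination (2 * π * ξ : ℂ) ^ 2 * Complex.I_sq
  calc 𝓕 (fun x ↦ (trapezoid (B + ρ) ρ x : ℂ)) ξ
      = ∫ x, (trapezoid (B + ρ) ρ x : ℂ) * Complex.exp (c * x) := by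
        rw [Real.fourier_real_eq_integral_exp_smul]
        congr 1 with x
        rw [smul_eq_mul, mul_comm, hc_def]
        push_cast
        ring_nf
    _ = _ := by
        rw [integral_trapezoid_mul_cexp hB hρ hc, hcosh, hcosh, hc2,
          freemanKernel_one_eq_cos_sub_cos B ρ hξ]
        push_cast
        rfl

lemma integral_cexp_mul_freemanKernel {B ρ : ℝ} (hB : 0 ≤ B) (hρ : 0 < ρ) (t : ℝ) :
    ∫ α : ℝ, Complex.exp (2 * π * Complex.I * α * t) * (freemanKernel B ρ 1 α : ℂ) =
      trapezoid (B + ρ) ρ t := by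
  have hinv := Integrable.fourierInv_fourier_eq (f := fun x ↦ (trapezoid (B + ρ) ρ x : ℂ))
    (integrable_trapezoid hρ).ofReal
    (by rw [fourier_trapezoid hB hρ]; exact (integrable_freemanKernel hρ (by linarith)).ofReal)
    (Complex.continuous_ofReal.comp (continuous_trapezoid (B + ρ) ρ)).continuousAt (v := t)
  rw [Real.fourierInv_eq', fourier_trapezoid hB hρ] at hinv
  rw [← hinv]
  congr 1 with α
  rw [smul_eq_mul, RCLike.inner_apply, conj_trivial]
  push_cast
  ring_nf

theorem freeman_kernel_sandwich_general (η ρ : ℝ) (hρ : 0 < ρ) (hρη : ρ ≤ η) (t : ℝ) :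
    (∫ α : ℝ, Complex.exp (2 * π * Complex.I * α * t) * (freemanKernel η ρ (-1) α : ℂ)).im = 0 ∧
    (∫ α : ℝ, Complex.exp (2 * π * Complex.I * α * t) * (freemanKernel η ρ 1 α : ℂ)).im = 0 ∧
    0 ≤ (∫ α : ℝ, Complex.exp (2 * π * Complex.I * α * t) * (freemanKernel η ρ (-1) α : ℂ)).re ∧
    (∫ α : ℝ, Complex.exp (2 * π * Complex.I * α * t) * (freemanKernel η ρ (-1) α : ℂ)).re ≤
      (if |t| < η then 1 else 0) ∧
    (if |t| < η then (1:ℝ) else 0) ≤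
      (∫ α : ℝ, Complex.exp (2 * π * Complex.I * α * t) * (freemanKernel η ρ 1 α : ℂ)).re ∧
    (∫ α : ℝ, Complex.exp (2 * π * Complex.I * α * t) * (freemanKernel η ρ 1 α : ℂ)).re ≤ 1 := by
  have hminus := integral_cexp_mul_freemanKernel (sub_nonneg.2 hρη) hρ t
  rw [sub_add_cancel, ← freemanKernel_neg_one] at hminus
  have hplus := integral_cexp_mul_freemanKernel (hρ.le.trans hρη) hρ t
  rw [hminus, hplus, Complex.ofReal_re, Complex.ofReal_re, Complex.ofReal_im, Complex.ofReal_im]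
  refine ⟨rfl, rfl, trapezoid_nonneg η ρ t, trapezoid_le_ite hρ, ?_, trapezoid_le_one _ ρ t⟩
  simpa only [add_sub_cancel_right] using ite_le_trapezoid (A := η + ρ) (x := t) hρ

theorem freeman_kernel_sandwich (η ρ : ℝ) (hη : 0 < η) (hρ : 0 < ρ) (hρη : ρ ≤ η) (t : ℝ) :
    (∫ α : ℝ, Complex.exp (2 * π * Complex.I * α * t) * (freemanKernel η ρ (-1) α : ℂ)).im = 0 ∧
    (∫ α : ℝ, Complex.exp (2 * π * Complex.I * α * t) * (freemanKernel η ρ 1 α : ℂ)).im = 0 ∧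
    0 ≤ (∫ α : ℝ, Complex.exp (2 * π * Complex.I * α * t) * (freemanKernel η ρ (-1) α : ℂ)).re ∧
    (∫ α : ℝ, Complex.exp (2 * π * Complex.I * α * t) * (freemanKernel η ρ (-1) α : ℂ)).re ≤
      (if |t| < η then 1 else 0) ∧
    (if |t| < η then (1:ℝ) else 0) ≤
      (∫ α : ℝ, Complex.exp (2 * π * Complex.I * α * t) * (freemanKernel η ρ 1 α : ℂ)).re ∧
    (∫ α : ℝ, Complex.exp (2 * π * Complex.I * α * t) * (freemanKernel η ρ 1 α : ℂ)).re ≤ 1 :=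
  freeman_kernel_sandwich_general η ρ hρ hρη t
end

section
/- Let $r \le n$ and let $\Lambda$ be an $n \times r$ real matrix of full rank $r$ such that $\Lambda\boldsymbol{\alpha} \notin \mathbb{Q}^n$ for every $\boldsymbol{\alpha} \in \mathbb{R}^r \setminus \{\mathbf{0}\}$. For $P \ge 1$ and $\boldsymbol{\alpha} \in \mathbb{R}^r$, define $\mathcal{F}(\boldsymbol{\alpha}; P) = \sup_{q \in \mathbb{N}, \mathbf{a} \in \mathbb{Z}^n} \prod_{v=1}^n (q + P|q\lambda_v - a_v|)^{-1}$, where $\boldsymbol{\lambda} = \Lambda\boldsymbol{\alpha}$. Then for any $0 < V \le W$, $\sup_{V \le |\Lambda\boldsymbol{\alpha}| \le W} \mathcal{F}(\boldsymbol{\alpha}; P) \to 0$ as $P \to \infty$. -/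
open Filter

/-- The Bentkus–Götze–Freeman function `𝓕(α; P)`, a supremum over `q ∈ ℕ` and `a ∈ ℤⁿ`
of `∏ᵥ (q + P|qλᵥ - aᵥ|)⁻¹` where `λ = Λα`. -/
noncomputable def calF (n : ℕ) (lam : Fin n → ℝ) (P : ℝ) : ℝ :=
  ⨆ (q : ℕ+) (a : Fin n → ℤ),
    ∏ v : Fin n, ((q : ℝ) + P * |(q : ℝ) * lam v - (a v : ℝ)|)⁻¹

/-!
Every factor of the product is at least `1`, so the product of inverses is at most
`(q + P · dist(qλ, ℤⁿ))⁻¹`. This is below `ε` once `q ≥ ε⁻¹`. For each of the finitely many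
`q < ε⁻¹`, the irrationality hypothesis says that `qλ ∉ ℤⁿ` on the compact set
`{λ ∈ range Λ | V ≤ ‖λ‖ ≤ W}`, so `dist(qλ, ℤⁿ)` has a positive lower bound `δ_q` there, and the
bound is below `ε` once `P ≥ ε⁻¹ / δ_q`.
-/

open Metric

def integerLattice (ι : Type*) : Set (ι → ℝ) :=
  Set.univ.pi fun _ => Set.range ((↑) : ℤ → ℝ)

section IntegerLattice

variable {ι : Type*}

lemma intCast_mem_integerLattice (a : ι → ℤ) : (fun v => (a v : ℝ)) ∈ integerLattice ι :=
  fun v _ => ⟨a v, rfl⟩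

lemma isClosed_integerLattice : IsClosed (integerLattice ι) :=
  isClosed_set_pi fun _ _ => Int.isClosedEmbedding_coe_real.isClosed_range

lemma nonempty_of_notMem_integerLattice {x : ι → ℝ} (hx : x ∉ integerLattice ι) : Nonempty ι := by
  by_contra h
  exact hx fun v _ => (h ⟨v⟩).elim

variable [Fintype ι]

lemma prod_inv_le_inv_add_mul_infDist [Nonempty ι] {P : ℝ} (hP : 0 ≤ P) (q : ℕ+)
    (x : ι → ℝ) (a : ι → ℤ) :
    ∏ v, ((q : ℝ) + P * |q * x v - a v|)⁻¹ ≤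
      ((q : ℝ) + P * infDist ((q : ℝ) • x) (integerLattice ι))⁻¹ := by
  classical
  set c : ι → ℝ := fun v => (q : ℝ) + P * |q * x v - a v|
  have hq : (1 : ℝ) ≤ q := by exact_mod_cast q.pos
  have hc : ∀ v, 1 ≤ c v := fun v => le_add_of_le_of_nonneg hq (mul_nonneg hP (abs_nonneg _))
  obtain ⟨v₀, hv₀⟩ := Finite.exists_max fun v => |q * x v - a v|
  have hdist : infDist ((q : ℝ) • x) (integerLattice ι) ≤ |q * x v₀ - a v₀| :=
    (infDist_le_dist_of_mem (intCast_mem_integerLattice a)).trans <|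
      (dist_pi_le_iff (abs_nonneg _)).2 fun v => by simpa [Real.dist_eq] using hv₀ v
  have hrest : ∏ v ∈ Finset.univ.erase v₀, (c v)⁻¹ ≤ 1 :=
    Finset.prod_le_one (fun v _ => inv_nonneg.2 (zero_le_one.trans (hc v)))
      fun v _ => inv_le_one_of_one_le₀ (hc v)
  calc ∏ v, (c v)⁻¹ = (c v₀)⁻¹ * ∏ v ∈ Finset.univ.erase v₀, (c v)⁻¹ :=
        (Finset.mul_prod_erase _ _ (Finset.mem_univ v₀)).symm
    _ ≤ (c v₀)⁻¹ := mul_le_of_le_one_right (inv_nonneg.2 (zero_le_one.trans (hc v₀))) hrest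
    _ ≤ _ := by
      have hpos : 0 < (q : ℝ) + P * infDist ((q : ℝ) • x) (integerLattice ι) :=
        add_pos_of_pos_of_nonneg (zero_lt_one.trans_le hq) (mul_nonneg hP infDist_nonneg)
      exact inv_anti₀ hpos (add_le_add_right (mul_le_mul_of_nonneg_left hdist hP) _)

lemma exists_pos_le_infDist_smul_integerLattice {K : Set (ι → ℝ)} (hK : IsCompact K) (t : ℝ)
    (hKt : ∀ x ∈ K, t • x ∉ integerLattice ι) :
    ∃ δ > 0, ∀ x ∈ K, δ ≤ infDist (t • x) (integerLattice ι) :=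
  hK.exists_forall_le' ((continuous_infDist_pt _).comp (continuous_const_smul t)).continuousOn
    fun x hx => (isClosed_integerLattice.notMem_iff_infDist_pos ⟨0, fun v _ => ⟨0, by simp⟩⟩).1
      (hKt x hx)

lemma eventually_forall_inv_add_mul_infDist_le {K : Set (ι → ℝ)} (hK : IsCompact K)
    (hKZ : ∀ x ∈ K, ∀ q : ℕ+, (q : ℝ) • x ∉ integerLattice ι) {ε : ℝ} (hε : 0 < ε) :
    ∀ᶠ P in atTop, ∀ x ∈ K, ∀ q : ℕ+,
      ((q : ℝ) + P * infDist ((q : ℝ) • x) (integerLattice ι))⁻¹ ≤ ε := by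
  have hsmall : {q : ℕ+ | (q : ℝ) < ε⁻¹}.Finite :=
    ((Set.finite_le_nat ⌊ε⁻¹⌋₊).preimage PNat.coe_injective.injOn).subset
      fun q hq => Nat.le_floor hq.le
  have hsmall_bound : ∀ q ∈ {q : ℕ+ | (q : ℝ) < ε⁻¹}, ∀ᶠ P in atTop, ∀ x ∈ K,
      ((q : ℝ) + P * infDist ((q : ℝ) • x) (integerLattice ι))⁻¹ ≤ ε := by
    intro q _
    obtain ⟨δ, hδ, hδK⟩ := exists_pos_le_infDist_smul_integerLattice hK q fun x hx => hKZ x hx q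
    filter_upwards [eventually_ge_atTop (ε⁻¹ / δ)] with P hP x hx
    have hPδ : ε⁻¹ ≤ P * δ := (div_le_iff₀ hδ).1 hP
    have hP0 : 0 ≤ P := (div_nonneg (inv_nonneg.2 hε.le) hδ.le).trans hP
    calc ((q : ℝ) + P * infDist ((q : ℝ) • x) (integerLattice ι))⁻¹ ≤ (P * δ)⁻¹ :=
          inv_anti₀ ((inv_pos.2 hε).trans_le hPδ) <|
            le_add_of_nonneg_of_le (Nat.cast_nonneg _) (mul_le_mul_of_nonneg_left (hδK x hx) hP0)
      _ ≤ ε := inv_le_of_inv_le₀ hε hPδ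
  filter_upwards [(eventually_all_finite hsmall).2 hsmall_bound, eventually_ge_atTop 0]
    with P hP hP0 x hx q
  by_cases hq : (q : ℝ) < ε⁻¹
  · exact hP q hq x hx
  · calc ((q : ℝ) + P * infDist ((q : ℝ) • x) (integerLattice ι))⁻¹ ≤ (q : ℝ)⁻¹ :=
          inv_anti₀ (by exact_mod_cast q.pos)
            (le_add_of_nonneg_right (mul_nonneg hP0 infDist_nonneg))
      _ ≤ ε := inv_le_of_inv_le₀ hε (not_lt.1 hq)

end IntegerLattice

lemma smul_mulVec_notMem_integerLattice {ι κ : Type*} [Fintype κ] {Λ : Matrix ι κ ℝ}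
    (hirr : ∀ α : κ → ℝ, α ≠ 0 → ¬ (∀ i : ι, ∃ q : ℚ, Λ.mulVec α i = q))
    {α : κ → ℝ} (hα : Λ.mulVec α ≠ 0) (q : ℕ+) : (q : ℝ) • Λ.mulVec α ∉ integerLattice ι := by
  intro h
  refine hirr α (by rintro rfl; simp at hα) fun i => ?_
  obtain ⟨m, hm⟩ := h i trivial
  refine ⟨m / q, ?_⟩
  have hq : (q : ℝ) ≠ 0 := by positivity
  push_cast
  rw [hm, Pi.smul_apply, smul_eq_mul]
  field_simp

lemma isCompact_range_mulVec_inter {ι κ : Type*} [Fintype ι] [Fintype κ] (Λ : Matrix ι κ ℝ)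
    (V W : ℝ) : IsCompact ({x ∈ Set.range Λ.mulVec | V ≤ ‖x‖} ∩ closedBall 0 W) := by
  refine (isCompact_closedBall 0 W).inter_left (IsClosed.inter ?_ ?_)
  · simpa [LinearMap.coe_range, Matrix.coe_mulVecLin] using
      (LinearMap.range Λ.mulVecLin).closed_of_finiteDimensional
  · exact isClosed_le continuous_const continuous_norm

section calF

variable {n : ℕ} {P : ℝ}

lemma calF_nonneg (lam : Fin n → ℝ) (hP : 0 ≤ P) : 0 ≤ calF n lam P :=
  Real.iSup_nonneg fun _ => Real.iSup_nonneg fun _ => Finset.prod_nonneg fun _ _ =>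
    inv_nonneg.2 (add_nonneg (Nat.cast_nonneg _) (mul_nonneg hP (abs_nonneg _)))

lemma calF_le [Nonempty (Fin n)] {lam : Fin n → ℝ} (hP : 0 ≤ P) {ε : ℝ} (hε : 0 ≤ ε)
    (h : ∀ q : ℕ+, ((q : ℝ) + P * infDist ((q : ℝ) • lam) (integerLattice (Fin n)))⁻¹ ≤ ε) :
    calF n lam P ≤ ε :=
  Real.iSup_le (fun q => Real.iSup_le
    (fun a => (prod_inv_le_inv_add_mul_infDist hP q lam a).trans (h q)) hε) hε

theorem tendsto_iSup_calF_of_isCompact {β : Type*} {K : Set (Fin n → ℝ)} (hK : IsCompact K)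
    (hKZ : ∀ x ∈ K, ∀ q : ℕ+, (q : ℝ) • x ∉ integerLattice (Fin n))
    (f : β → Fin n → ℝ) (hf : ∀ b, f b ∈ K) :
    Tendsto (fun P => ⨆ b, calF n (f b) P) atTop (nhds 0) := by
  cases isEmpty_or_nonempty β
  · simp
  obtain ⟨b⟩ := ‹Nonempty β›
  have := nonempty_of_notMem_integerLattice (one_smul ℝ (f b) ▸ hKZ _ (hf b) 1)
  refine tendsto_order.2 ⟨fun a ha => ?_, fun ε hε => ?_⟩
  · filter_upwards [eventually_ge_atTop 0] with P hP
    exact ha.trans_le (Real.iSup_nonneg fun b => calF_nonneg (f b) hP)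
  · filter_upwards [eventually_forall_inv_add_mul_infDist_le hK hKZ (half_pos hε),
      eventually_ge_atTop 0] with P hP hP0
    exact (Real.iSup_le (fun b => calF_le hP0 (half_pos hε).le (hP (f b) (hf b)))
      (half_pos hε).le).trans_lt (half_lt_self hε)

end calF

theorem bentkus_goetze_freeman_general (n r : ℕ)
    (Λ : Matrix (Fin n) (Fin r) ℝ)
    (hirr : ∀ α : Fin r → ℝ, α ≠ 0 → ¬ (∀ i : Fin n, ∃ q : ℚ, Λ.mulVec α i = q))
    (V W : ℝ) (hV : 0 < V) :
    Tendsto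
      (fun P : ℝ =>
        ⨆ α : {α : Fin r → ℝ // V ≤ ‖Λ.mulVec α‖ ∧ ‖Λ.mulVec α‖ ≤ W},
          calF n (Λ.mulVec α.val) P)
      atTop (nhds 0) := by
  set K := {x ∈ Set.range Λ.mulVec | V ≤ ‖x‖} ∩ closedBall 0 W
  have hKZ : ∀ x ∈ K, ∀ q : ℕ+, (q : ℝ) • x ∉ integerLattice (Fin n) := by
    rintro _ ⟨⟨⟨α, rfl⟩, hVα⟩, -⟩ q
    exact smul_mulVec_notMem_integerLattice hirr (norm_pos_iff.1 (hV.trans_le hVα)) q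
  have hαK : ∀ α : {α : Fin r → ℝ // V ≤ ‖Λ.mulVec α‖ ∧ ‖Λ.mulVec α‖ ≤ W}, Λ.mulVec α.val ∈ K :=
    fun α => ⟨⟨⟨α.val, rfl⟩, α.2.1⟩, mem_closedBall_zero_iff.2 α.2.2⟩
  exact tendsto_iSup_calF_of_isCompact (isCompact_range_mulVec_inter Λ V W) hKZ _ hαK

theorem bentkus_goetze_freeman (n r : ℕ) (hr : 0 < r) (hrn : r ≤ n)
    (Λ : Matrix (Fin n) (Fin r) ℝ) (hrank : Λ.rank = r)
    (hirr : ∀ α : Fin r → ℝ, α ≠ 0 → ¬ (∀ i : Fin n, ∃ q : ℚ, Λ.mulVec α i = q))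
    (V W : ℝ) (hV : 0 < V) (hVW : V ≤ W) :
    Tendsto
      (fun P : ℝ =>
        ⨆ α : {α : Fin r → ℝ // V ≤ ‖Λ.mulVec α‖ ∧ ‖Λ.mulVec α‖ ≤ W},
          calF n (Λ.mulVec α.val) P)
      atTop (nhds 0) :=
  bentkus_goetze_freeman_general n r Λ hirr V W hV
end
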